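/- arXiv:1511.00976 — 5 statements merged into one kernel-verified Lean document; each statement's English description precedes it below -/
import Mathlib

section
/- Every pair of quantum testers A and B of the same type is λ-compatible with λ = 1/2; that is, there exist noise testers N^A and N^B such that (1/2)A + (1/2)N^A and (1/2)B + (1/2)N^B are compatible. Consequently the robustness of incompatibility satisfies R(A,B) ≤ 1/2. -/
/-!
Take as noise for `A` the trivial tester that spreads `I ⊗ σ` uniformly over the outcomes of `A`,
and symmetrically for `B`. The even mixture of `A` and `B`, each padded with a uniformly random
label for the other outcome set, is a joint tester: its `A`-marginal is `½ A + ½ N^A`, since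
summing `B` over its outcomes leaves exactly `I ⊗ σ`, and likewise for `B`. At `λ = ½` the two
weights agree, which is what makes both marginals come out right at once.
-/

open Matrix Finset
open scoped Kronecker ComplexOrder

noncomputable section

variable {n m : Type*} [Fintype n] [DecidableEq n] [Fintype m] [DecidableEq m]

/-- A density operator: positive semidefinite with unit trace. -/
def IsDensity (ρ : Matrix n n ℂ) : Prop := ρ.PosSemidef ∧ ρ.trace = 1

/-- A quantum tester on `H₁ ⊗ H₀` with normalization state `ρ` on `H₀`:
a family of positive semidefinite operators summing to `I₁ ⊗ ρ`. -/
def IsTester {S : Type*} [Fintype S] (T : S → Matrix (m × n) (m × n) ℂ)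
    (ρ : Matrix n n ℂ) : Prop :=
  IsDensity ρ ∧ (∀ j, (T j).PosSemidef) ∧
    ∑ j, T j = (1 : Matrix m m ℂ) ⊗ₖ ρ

/-- Two testers are compatible if a joint tester with the correct marginals exists. -/
def TesterCompatible {S S' : Type*} [Fintype S] [Fintype S']
    (A : S → Matrix (m × n) (m × n) ℂ) (B : S' → Matrix (m × n) (m × n) ℂ) : Prop :=
  ∃ (C : S × S' → Matrix (m × n) (m × n) ℂ) (τ : Matrix n n ℂ),
    IsTester C τ ∧ (∀ j, ∑ k, C (j, k) = A j) ∧ (∀ k, ∑ j, C (j, k) = B k)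

/-- λ-compatibility of testers: noisy mixtures become compatible. -/
def TesterLambdaCompatible {S S' : Type*} [Fintype S] [Fintype S']
    (A : S → Matrix (m × n) (m × n) ℂ) (B : S' → Matrix (m × n) (m × n) ℂ)
    (lam : ℝ) : Prop :=
  ∃ (NA : S → Matrix (m × n) (m × n) ℂ) (NB : S' → Matrix (m × n) (m × n) ℂ)
    (ρ' σ' : Matrix n n ℂ), IsTester NA ρ' ∧ IsTester NB σ' ∧
    TesterCompatible (fun j => (1 - lam) • A j + lam • NA j)
      (fun k => (1 - lam) • B k + lam • NB k)

/-- The robustness of incompatibility of two testers. -/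
noncomputable def TesterRobustness {S S' : Type*} [Fintype S] [Fintype S']
    (A : S → Matrix (m × n) (m × n) ℂ) (B : S' → Matrix (m × n) (m × n) ℂ) : ℝ :=
  sInf {lam : ℝ | lam ∈ Set.Icc (0 : ℝ) 1 ∧ TesterLambdaCompatible A B lam}

/-- The robustness of state incompatibility. -/
noncomputable def StateRobustness (ρ σ : Matrix n n ℂ) : ℝ :=
  sInf {lam : ℝ | lam ∈ Set.Icc (0 : ℝ) 1 ∧ ∃ ρ' σ' : Matrix n n ℂ,
    IsDensity ρ' ∧ IsDensity σ' ∧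
    (1 - lam) • ρ + lam • ρ' = (1 - lam) • σ + lam • σ'}

/-- The trace norm of a matrix, as the sum of its singular values. -/
noncomputable def traceNorm (X : Matrix n n ℂ) : ℝ :=
  ∑ i, Real.sqrt ((Matrix.posSemidef_conjTranspose_mul_self X).1.eigenvalues i)

/-- Inverse of the square root of a Hermitian matrix, taken on its support. -/
noncomputable def invSqrt {ρ : Matrix n n ℂ} (hρ : ρ.IsHermitian) : Matrix n n ℂ :=
  (Matrix.IsHermitian.eigenvectorUnitary hρ : Matrix n n ℂ) *
    Matrix.diagonal (fun i => if hρ.eigenvalues i = 0 then (0 : ℂ)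
      else ((Real.sqrt (hρ.eigenvalues i))⁻¹ : ℝ)) *
    (Matrix.IsHermitian.eigenvectorUnitary hρ : Matrix n n ℂ)ᴴ

/-- Orthogonal projection onto the support of a Hermitian matrix. -/
noncomputable def suppProj {ρ : Matrix n n ℂ} (hρ : ρ.IsHermitian) : Matrix n n ℂ :=
  (Matrix.IsHermitian.eigenvectorUnitary hρ : Matrix n n ℂ) *
    Matrix.diagonal (fun i => if hρ.eigenvalues i = 0 then (0 : ℂ) else 1) *
    (Matrix.IsHermitian.eigenvectorUnitary hρ : Matrix n n ℂ)ᴴ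

/-- A POVM with unit `e`: positive semidefinite operators summing to `e`. -/
def IsPOVMOn {S : Type*} [Fintype S] (e : Matrix n n ℂ) (P : S → Matrix n n ℂ) : Prop :=
  (∀ j, (P j).PosSemidef) ∧ ∑ j, P j = e

/-- Compatibility of POVMs with unit `e`. -/
def POVMCompatibleOn {S S' : Type*} [Fintype S] [Fintype S'] (e : Matrix n n ℂ)
    (P : S → Matrix n n ℂ) (Q : S' → Matrix n n ℂ) : Prop :=
  ∃ R : S × S' → Matrix n n ℂ, IsPOVMOn e R ∧
    (∀ j, ∑ k, R (j, k) = P j) ∧ (∀ k, ∑ j, R (j, k) = Q k)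

/-- λ-compatibility of POVMs with unit `e`. -/
def POVMLambdaCompatibleOn {S S' : Type*} [Fintype S] [Fintype S'] (e : Matrix n n ℂ)
    (P : S → Matrix n n ℂ) (Q : S' → Matrix n n ℂ) (lam : ℝ) : Prop :=
  ∃ (JP : S → Matrix n n ℂ) (JQ : S' → Matrix n n ℂ),
    IsPOVMOn e JP ∧ IsPOVMOn e JQ ∧
    POVMCompatibleOn e (fun j => (1 - lam) • P j + lam • JP j)
      (fun k => (1 - lam) • Q k + lam • JQ k)

/-- The robustness of incompatibility of two POVMs with unit `e`. -/
noncomputable def POVMRobustnessOn {S S' : Type*} [Fintype S] [Fintype S'] (e : Matrix n n ℂ)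
    (P : S → Matrix n n ℂ) (Q : S' → Matrix n n ℂ) : ℝ :=
  sInf {lam : ℝ | lam ∈ Set.Icc (0 : ℝ) 1 ∧ POVMLambdaCompatibleOn e P Q lam}

/-- The canonical POVM associated with a tester with normalization state `ρ`. -/
noncomputable def canonicalPOVM {S : Type*} [Fintype S]
    (T : S → Matrix (m × n) (m × n) ℂ) {ρ : Matrix n n ℂ} (hρ : ρ.IsHermitian)
    (j : S) : Matrix (m × n) (m × n) ℂ :=
  ((1 : Matrix m m ℂ) ⊗ₖ invSqrt hρ) * T j * ((1 : Matrix m m ℂ) ⊗ₖ invSqrt hρ)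

end

theorem inv_card_smul_sum_const {M : Type*} [AddCommGroup M] [Module ℝ M]
    {ι : Type*} [Fintype ι] [Nonempty ι] (x : M) :
    (Fintype.card ι : ℝ)⁻¹ • ∑ _i : ι, x = x := by
  rw [sum_const, card_univ, ← Nat.cast_smul_eq_nsmul ℝ, smul_smul,
    inv_mul_cancel₀ (Nat.cast_ne_zero.mpr Fintype.card_ne_zero), one_smul]

section Testers

variable {n m : Type*} [Fintype n] {S S' : Type*} [Fintype S] [Fintype S']

theorem IsDensity.smul_add_smul {ρ ρ' : Matrix n n ℂ} (hρ : IsDensity ρ) (hρ' : IsDensity ρ')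
    {a b : ℝ} (ha : 0 ≤ a) (hb : 0 ≤ b) (hab : a + b = 1) : IsDensity (a • ρ + b • ρ') := by
  refine ⟨(hρ.1.smul ha).add (hρ'.1.smul hb), ?_⟩
  rw [trace_add, trace_smul, trace_smul, hρ.2, hρ'.2, ← add_smul, hab, one_smul]

variable [DecidableEq m]

theorem IsTester.smul_add_smul [Fintype m] {T T' : S → Matrix (m × n) (m × n) ℂ}
    {ρ ρ' : Matrix n n ℂ} (hT : IsTester T ρ) (hT' : IsTester T' ρ') {a b : ℝ} (ha : 0 ≤ a)
    (hb : 0 ≤ b) (hab : a + b = 1) : IsTester (fun j => a • T j + b • T' j) (a • ρ + b • ρ') := by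
  refine ⟨hT.1.smul_add_smul hT'.1 ha hb hab,
    fun j => ((hT.2.1 j).smul ha).add ((hT'.2.1 j).smul hb), ?_⟩
  rw [sum_add_distrib, ← smul_sum, ← smul_sum, hT.2.2, hT'.2.2, kronecker_add,
    kronecker_smul, kronecker_smul]

theorem IsTester.nonempty [Fintype m] [Nonempty m] {T : S → Matrix (m × n) (m × n) ℂ}
    {ρ : Matrix n n ℂ} (hT : IsTester T ρ) : Nonempty S := by
  by_contra hS
  rw [not_nonempty_iff] at hS
  have h := congrArg trace hT.2.2
  rw [univ_eq_empty, sum_empty, trace_zero, trace_kronecker, trace_one, hT.1.2, mul_one] at h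
  exact Fintype.card_ne_zero (α := m) (by exact_mod_cast h.symm)

theorem IsTester.comp_fst [Nonempty S'] {T : S → Matrix (m × n) (m × n) ℂ} {ρ : Matrix n n ℂ}
    (hT : IsTester T ρ) :
    IsTester (fun jk : S × S' => (Fintype.card S' : ℝ)⁻¹ • T jk.1) ρ := by
  refine ⟨hT.1, fun jk => (hT.2.1 jk.1).smul (by positivity), ?_⟩
  simp only [Fintype.sum_prod_type_right, ← smul_sum, inv_card_smul_sum_const, hT.2.2]

theorem IsTester.comp_snd [Nonempty S] {T : S' → Matrix (m × n) (m × n) ℂ} {ρ : Matrix n n ℂ}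
    (hT : IsTester T ρ) :
    IsTester (fun jk : S × S' => (Fintype.card S : ℝ)⁻¹ • T jk.2) ρ := by
  refine ⟨hT.1, fun jk => (hT.2.1 jk.2).smul (by positivity), ?_⟩
  simp only [Fintype.sum_prod_type, ← smul_sum, inv_card_smul_sum_const, hT.2.2]

noncomputable def uniformTester (S : Type*) [Fintype S] (σ : Matrix n n ℂ) :
    S → Matrix (m × n) (m × n) ℂ :=
  fun _ => (Fintype.card S : ℝ)⁻¹ • ((1 : Matrix m m ℂ) ⊗ₖ σ)

theorem isTester_uniformTester [Fintype m] [Nonempty S] {σ : Matrix n n ℂ} (hσ : IsDensity σ) :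
    IsTester (uniformTester (m := m) S σ) σ :=
  ⟨hσ, fun _ => (PosSemidef.one.kronecker hσ.1).smul (by positivity),
    by simp only [uniformTester, ← smul_sum, inv_card_smul_sum_const]⟩

theorem testerLambdaCompatible_half [Fintype m] [Nonempty S] [Nonempty S']
    {A : S → Matrix (m × n) (m × n) ℂ} {B : S' → Matrix (m × n) (m × n) ℂ} {ρ σ : Matrix n n ℂ}
    (hA : IsTester A ρ) (hB : IsTester B σ) : TesterLambdaCompatible A B (1 / 2) := by
  have half : (1 : ℝ) - 1 / 2 = 1 / 2 := by norm_num
  refine ⟨uniformTester S σ, uniformTester S' ρ, σ, ρ, isTester_uniformTester hB.1,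
    isTester_uniformTester hA.1,
    fun jk => (1 - 1 / 2 : ℝ) • ((Fintype.card S' : ℝ)⁻¹ • A jk.1) +
      (1 / 2 : ℝ) • ((Fintype.card S : ℝ)⁻¹ • B jk.2), _,
    hA.comp_fst.smul_add_smul hB.comp_snd (by norm_num) (by norm_num) (by norm_num),
    fun j => ?_, fun k => ?_⟩
  · simp only [sum_add_distrib, ← smul_sum, inv_card_smul_sum_const, hB.2.2, uniformTester]
  · simp only [sum_add_distrib, ← smul_sum, inv_card_smul_sum_const, hA.2.2, uniformTester, half]
    exact add_comm _ _

theorem testerLambdaCompatible_of_isEmpty [IsEmpty m] {A : S → Matrix (m × n) (m × n) ℂ}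
    {B : S' → Matrix (m × n) (m × n) ℂ} {ρ σ : Matrix n n ℂ} (hA : IsTester A ρ)
    (hB : IsTester B σ) (lam : ℝ) : TesterLambdaCompatible A B lam :=
  ⟨A, B, ρ, σ, hA, hB, fun _ => 0, ρ,
    ⟨hA.1, fun _ => PosSemidef.zero, Subsingleton.elim _ _⟩,
    fun _ => Subsingleton.elim _ _, fun _ => Subsingleton.elim _ _⟩

theorem testerRobustness_le {A : S → Matrix (m × n) (m × n) ℂ}
    {B : S' → Matrix (m × n) (m × n) ℂ} {lam : ℝ} (hlam : lam ∈ Set.Icc (0 : ℝ) 1)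
    (h : TesterLambdaCompatible A B lam) : TesterRobustness A B ≤ lam :=
  csInf_le ⟨0, fun _ hx => hx.1.1⟩ ⟨hlam, h⟩

end Testers

theorem stmt6_general {n m : Type*} [Fintype n] [Fintype m] [DecidableEq m]
    {S S' : Type*} [Fintype S] [Fintype S']
    (A : S → Matrix (m × n) (m × n) ℂ) (B : S' → Matrix (m × n) (m × n) ℂ)
    (ρ σ : Matrix n n ℂ) (hA : IsTester A ρ) (hB : IsTester B σ) :
    TesterLambdaCompatible A B (1/2) ∧ TesterRobustness A B ≤ 1/2 := by
  have hcompat : TesterLambdaCompatible A B (1/2) := by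
    rcases isEmpty_or_nonempty m with hm | hm
    · exact testerLambdaCompatible_of_isEmpty hA hB _
    · have := hA.nonempty
      have := hB.nonempty
      exact testerLambdaCompatible_half hA hB
  exact ⟨hcompat, testerRobustness_le ⟨by norm_num, by norm_num⟩ hcompat⟩

/-- every pair of testers of the same type is λ-compatible with
`λ = 1/2`, hence the robustness of incompatibility is at most `1/2`. -/
theorem stmt6 {n m : Type*} [Fintype n] [DecidableEq n] [Fintype m] [DecidableEq m]
    {S S' : Type*} [Fintype S] [Fintype S']
    (A : S → Matrix (m × n) (m × n) ℂ) (B : S' → Matrix (m × n) (m × n) ℂ)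
    (ρ σ : Matrix n n ℂ) (hA : IsTester A ρ) (hB : IsTester B σ) :
    TesterLambdaCompatible A B (1/2) ∧ TesterRobustness A B ≤ 1/2 :=
  stmt6_general A B ρ σ hA hB
end

section
/- For every pair of density operators ρ and σ on a finite-dimensional Hilbert space, the robustness of state incompatibility equals R_S(ρ,σ) = ‖ρ−σ‖₁ / (‖ρ−σ‖₁ + 2), where ‖·‖₁ is the trace norm. -/
open Matrix Finset
open scoped Kronecker ComplexOrder

/-!
Write `D = ρ - σ` and `s = ‖D‖₁ / 2`. Mixing with densities `ρ'`, `σ'` at weight `λ` succeeds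
exactly when `(1 - λ) D = λ (σ' - ρ')`. Since `tr D = 0`, the Jordan decomposition `D = D₊ - D₋`
has `tr D₊ = tr D₋ = s`, so `λ = s / (s + 1)` works with `ρ' = D₋ / s` and `σ' = D₊ / s`.
Conversely, pairing with the projection `Q` onto the positive eigenspace of `D` gives
`(1 - λ) s = λ tr (Q (σ' - ρ')) ≤ λ`, i.e. `λ ≥ s / (s + 1) = ‖D‖₁ / (‖D‖₁ + 2)`.
-/

open scoped MatrixOrder

namespace Matrix

variable {n 𝕜 : Type*} [Fintype n] [DecidableEq n] [RCLike 𝕜]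

lemma IsHermitian.trace_cfc {A : Matrix n n 𝕜} (hA : A.IsHermitian) (f : ℝ → ℝ) :
    (cfc f A).trace = ∑ i, (f (hA.eigenvalues i) : 𝕜) := by
  rw [hA.cfc_eq, IsHermitian.cfc, Unitary.conjStarAlgAut_apply, trace_mul_cycle,
    Unitary.coe_star_mul_self, one_mul, trace_diagonal]
  rfl

lemma PosSemidef.trace_mul_nonneg {A B : Matrix n n 𝕜} (hA : A.PosSemidef) (hB : B.PosSemidef) :
    0 ≤ (A * B).trace := by
  obtain ⟨C, rfl⟩ := CStarAlgebra.nonneg_iff_eq_star_mul_self.mp hA.nonneg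
  rw [mul_assoc, trace_mul_comm, mul_assoc, ← mul_assoc]
  simpa [star_eq_conjTranspose] using (hB.mul_mul_conjTranspose_same C).trace_nonneg

end Matrix

lemma traceNorm_eq_sum_abs_eigenvalues {n : Type*} [Fintype n] [DecidableEq n]
    {A : Matrix n n ℂ} (hA : A.IsHermitian) :
    traceNorm A = ∑ i, |hA.eigenvalues i| := by
  have hAA := posSemidef_conjTranspose_mul_self A
  have h : cfc Real.sqrt (Aᴴ * A) = cfc (fun x : ℝ => |x|) A := by
    rw [hA.eq, ← sq, ← cfc_pow_id (R := ℝ) A 2, ← cfc_comp' Real.sqrt (· ^ 2) A]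
    simp only [Real.sqrt_sq_eq_abs]
  have := hAA.1.trace_cfc Real.sqrt
  rw [h, hA.trace_cfc] at this
  unfold traceNorm
  exact_mod_cast this.symm

lemma Finset.sum_max_zero_eq_half_sum_abs {ι : Type*} (s : Finset ι) {f : ι → ℝ}
    (hf : ∑ i ∈ s, f i = 0) : ∑ i ∈ s, max (f i) 0 = (∑ i ∈ s, |f i|) / 2 := by
  have hmax (x : ℝ) : max x 0 = (x + |x|) / 2 := by
    rcases le_total x 0 with hx | hx
    · rw [max_eq_right hx, abs_of_nonpos hx]; ring
    · rw [max_eq_left hx, abs_of_nonneg hx]; ring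
  simp_rw [hmax, ← Finset.sum_div, Finset.sum_add_distrib, hf, zero_add]

namespace Matrix.IsHermitian

variable {n : Type*} [Fintype n] [DecidableEq n] {D : Matrix n n ℂ}

lemma sum_eigenvalues_eq_zero (hD : D.IsHermitian) (htr : D.trace = 0) :
    ∑ i, hD.eigenvalues i = 0 := by
  have h := hD.trace_eq_sum_eigenvalues
  rw [htr, ← RCLike.ofReal_sum] at h
  exact RCLike.ofReal_eq_zero.mp h.symm

lemma exists_jordan_decomposition (hD : D.IsHermitian) (htr : D.trace = 0) :
    ∃ P N : Matrix n n ℂ, P.PosSemidef ∧ N.PosSemidef ∧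
      P.trace = (traceNorm D / 2 : ℝ) ∧ N.trace = (traceNorm D / 2 : ℝ) ∧ D = P - N := by
  have hsum := hD.sum_eigenvalues_eq_zero htr
  have hsum_neg : ∑ i, -hD.eigenvalues i = 0 := by rw [Finset.sum_neg_distrib, hsum, neg_zero]
  refine ⟨cfc (fun x : ℝ => max x 0) D, cfc (fun x : ℝ => max (-x) 0) D,
    (cfc_nonneg fun x _ => le_max_right x 0).posSemidef,
    (cfc_nonneg fun x _ => le_max_right (-x) 0).posSemidef, ?_, ?_, ?_⟩
  · rw [hD.trace_cfc, traceNorm_eq_sum_abs_eigenvalues hD,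
      ← Finset.sum_max_zero_eq_half_sum_abs _ hsum]
    push_cast; rfl
  · rw [hD.trace_cfc, traceNorm_eq_sum_abs_eigenvalues hD]
    simp_rw [← abs_neg (hD.eigenvalues _)]
    rw [← Finset.sum_max_zero_eq_half_sum_abs _ hsum_neg]
    push_cast; rfl
  · rw [← cfc_sub (fun x : ℝ => max x 0) (fun x : ℝ => max (-x) 0) D]
    simp only [max_zero_sub_max_neg_zero_eq_self]
    exact (cfc_id' ℝ D).symm

lemma exists_trace_mul_eq_half_traceNorm (hD : D.IsHermitian) (htr : D.trace = 0) :
    ∃ Q : Matrix n n ℂ, Q.PosSemidef ∧ (1 - Q).PosSemidef ∧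
      (Q * D).trace = (traceNorm D / 2 : ℝ) := by
  have hsum := hD.sum_eigenvalues_eq_zero htr
  set χ : ℝ → ℝ := fun x => if 0 < x then 1 else 0
  -- `χ` is discontinuous, but any function is continuous on the finite spectrum.
  have hχ : ContinuousOn χ (spectrum ℝ D) := D.finite_real_spectrum.continuousOn χ
  refine ⟨cfc χ D, (cfc_nonneg fun x _ => by positivity).posSemidef, ?_, ?_⟩
  · rw [← cfc_const_one ℝ D, ← cfc_sub _ _ D]
    exact (cfc_nonneg fun x _ => by simp only [χ]; split_ifs <;> norm_num).posSemidef
  · nth_rw 2 [← cfc_id' ℝ D]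
    rw [← cfc_mul _ _ D, hD.trace_cfc, traceNorm_eq_sum_abs_eigenvalues hD,
      ← Finset.sum_max_zero_eq_half_sum_abs _ hsum]
    push_cast
    refine Finset.sum_congr rfl fun i _ => ?_
    simp only [χ]
    split_ifs with h
    · simp [h.le]
    · simp [not_lt.mp h]

end Matrix.IsHermitian

section Robustness

variable {n : Type*} [Fintype n]

lemma exists_mixture_eq_of_sub_eq {ρ σ P N : Matrix n n ℂ} (hρ : IsDensity ρ)
    (hP : P.PosSemidef) (hN : N.PosSemidef) {s : ℝ} (hs : 0 ≤ s)
    (hPt : P.trace = s) (hNt : N.trace = s) (h : ρ - σ = P - N) :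
    ∃ ρ' σ' : Matrix n n ℂ, IsDensity ρ' ∧ IsDensity σ' ∧
      (1 - s / (s + 1)) • ρ + (s / (s + 1)) • ρ' = (1 - s / (s + 1)) • σ + (s / (s + 1)) • σ' := by
  rcases hs.eq_or_lt with rfl | hs
  · have hρσ : ρ = σ := by
      rw [← sub_eq_zero, h, (hP.trace_eq_zero_iff).mp (by simpa using hPt),
        (hN.trace_eq_zero_iff).mp (by simpa using hNt), sub_zero]
    exact ⟨ρ, ρ, hρ, hρ, by rw [hρσ]⟩
  have isDensity_smul {X : Matrix n n ℂ} (hX : X.PosSemidef) (hXt : X.trace = s) :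
      IsDensity (s⁻¹ • X) :=
    ⟨hX.smul (inv_nonneg.mpr hs.le), by
      rw [trace_smul, hXt, Complex.real_smul, ← Complex.ofReal_mul, inv_mul_cancel₀ hs.ne',
        Complex.ofReal_one]⟩
  refine ⟨s⁻¹ • N, s⁻¹ • P, isDensity_smul hN hNt, isDensity_smul hP hPt, ?_⟩
  have hcoef : 1 - s / (s + 1) = s / (s + 1) * s⁻¹ := by field_simp; ring
  rw [smul_smul, smul_smul, ← hcoef, ← smul_add, ← smul_add,
    (sub_eq_sub_iff_add_eq_add.mp h), add_comm σ P]

lemma div_add_one_le_of_mixture_eq [DecidableEq n] {ρ σ ρ' σ' Q : Matrix n n ℂ}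
    (hρ' : ρ'.PosSemidef) (hσ' : IsDensity σ') (hQ : Q.PosSemidef) (hQ1 : (1 - Q).PosSemidef)
    {s lam : ℝ} (hs : 0 ≤ s) (hlam : 0 ≤ lam) (hQt : (Q * (ρ - σ)).trace = s)
    (h : (1 - lam) • ρ + lam • ρ' = (1 - lam) • σ + lam • σ') :
    s / (s + 1) ≤ lam := by
  have hmix : (1 - lam) • (ρ - σ) = lam • (σ' - ρ') := by
    rw [smul_sub, smul_sub, sub_eq_sub_iff_add_eq_add, h, add_comm]
  have htrace : ((1 - lam) * s : ℝ) = (lam : ℂ) * ((Q * σ').trace - (Q * ρ').trace) := by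
    have := congrArg (fun X => (Q * X).trace) hmix
    simp only [mul_smul_comm, trace_smul] at this
    rw [hQt, mul_sub, trace_sub] at this
    simpa [Complex.real_smul] using this
  have hρ'_nonneg : 0 ≤ (Q * ρ').trace := hQ.trace_mul_nonneg hρ'
  have hσ'_le : (Q * σ').trace ≤ 1 := by
    have := hQ1.trace_mul_nonneg hσ'.1
    rwa [sub_mul, one_mul, trace_sub, hσ'.2, sub_nonneg] at this
  have hle : ((1 - lam) * s : ℝ) ≤ (lam : ℂ) := by
    rw [htrace]
    calc (lam : ℂ) * ((Q * σ').trace - (Q * ρ').trace) ≤ lam * 1 := by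
          gcongr
          exact (sub_le_self _ hρ'_nonneg).trans hσ'_le
      _ = lam := mul_one _
  rw [div_le_iff₀ (by linarith)]
  nlinarith [Complex.real_le_real.mp hle]

end Robustness

/-- the robustness of state incompatibility equals
`‖ρ−σ‖₁ / (‖ρ−σ‖₁ + 2)`. -/
theorem stmt9 {n : Type*} [Fintype n] [DecidableEq n]
    (ρ σ : Matrix n n ℂ) (hρ : IsDensity ρ) (hσ : IsDensity σ) :
    StateRobustness ρ σ = traceNorm (ρ - σ) / (traceNorm (ρ - σ) + 2) := by
  have hD : (ρ - σ).IsHermitian := hρ.1.1.sub hσ.1.1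
  have htr : (ρ - σ).trace = 0 := by rw [trace_sub, hρ.2, hσ.2, sub_self]
  set s := traceNorm (ρ - σ) / 2
  have hs : 0 ≤ s := by unfold s traceNorm; positivity
  obtain ⟨P, N, hP, hN, hPt, hNt, hPN⟩ := hD.exists_jordan_decomposition htr
  obtain ⟨Q, hQ, hQ1, hQt⟩ := hD.exists_trace_mul_eq_half_traceNorm htr
  have hr : traceNorm (ρ - σ) / (traceNorm (ρ - σ) + 2) = s / (s + 1) := by
    simp only [s]; field_simp
  rw [hr]
  refine IsLeast.csInf_eq ⟨⟨⟨by positivity, (div_le_one (by linarith)).mpr (by linarith)⟩,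
    exists_mixture_eq_of_sub_eq hρ hP hN hs hPt hNt hPN⟩, ?_⟩
  rintro lam ⟨⟨hlam, -⟩, ρ', σ', hρ', hσ', h⟩
  exact div_add_one_le_of_mixture_eq hρ'.1 hσ' hQ hQ1 hs hlam hQt h
end

section
/- For qubit density operators ρ = (1/2)(I + r·σ⃗) and σ = (1/2)(I + s·σ⃗) with Bloch vectors r, s ∈ ℝ³, the robustness of state incompatibility equals R_S(ρ,σ) = ‖r−s‖ / (‖r−s‖ + 2), where ‖r−s‖ is the Euclidean norm. -/
open Matrix Finset
open scoped Kronecker ComplexOrder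

/-- The Pauli matrices. -/
def pauliX : Matrix (Fin 2) (Fin 2) ℂ := !![0, 1; 1, 0]
def pauliY : Matrix (Fin 2) (Fin 2) ℂ := !![0, -Complex.I; Complex.I, 0]
def pauliZ : Matrix (Fin 2) (Fin 2) ℂ := !![1, 0; 0, -1]

/-!
With `v = r - s` and `d = ‖v‖`, the states differ by `ρ - σ = ½ v·σ⃗`, and mixing in noise with
weight `λ` makes them equal exactly when `(1 - λ)(ρ - σ) = λ(σ' - ρ')`. Choosing `σ'`, `ρ'` to be
the pure states with Bloch vectors `±v/d` gives `σ' - ρ' = (v/d)·σ⃗`, which is feasible for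
`λ = d/(d + 2)`. Conversely, pairing the identity with `(v/d)·σ⃗`, whose expectation in every
state lies in `[-1, 1]`, yields `(1 - λ) d ≤ 2λ`.
-/

lemma Matrix.PosSemidef.trace_mul_nonneg_s10 {k : Type*} [Fintype k] [DecidableEq k]
    {A B : Matrix k k ℂ} (hA : A.PosSemidef) (hB : B.PosSemidef) : 0 ≤ (A * B).trace := by
  open scoped MatrixOrder in
  obtain ⟨C, rfl⟩ := CStarAlgebra.nonneg_iff_eq_star_mul_self.mp hA.nonneg
  rw [mul_assoc, trace_mul_comm]
  exact (hB.mul_mul_conjTranspose_same C).trace_nonneg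

lemma exists_dotProduct_self_le_one_smul_eq {ι : Type*} [Fintype ι] (v : ι → ℝ) :
    ∃ u : ι → ℝ, u ⬝ᵥ u ≤ 1 ∧ √(v ⬝ᵥ v) • u = v ∧ u ⬝ᵥ v = √(v ⬝ᵥ v) := by
  set d := √(v ⬝ᵥ v)
  have hvv : d ^ 2 = v ⬝ᵥ v := Real.sq_sqrt (Finset.sum_nonneg fun i _ => mul_self_nonneg (v i))
  by_cases hd : d = 0
  · have hv : v = 0 := dotProduct_self_eq_zero.mp (by rw [← hvv, hd]; norm_num)
    exact ⟨0, by simp [hv, hd]⟩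
  · refine ⟨d⁻¹ • v, ?_, smul_inv_smul₀ hd v, ?_⟩
    · rw [smul_dotProduct, dotProduct_smul, smul_smul, smul_eq_mul, ← hvv]
      field_simp
      rfl
    · rw [smul_dotProduct, smul_eq_mul, ← hvv]
      field_simp

namespace Qubit

noncomputable def pauliVec : (Fin 3 → ℝ) →ₗ[ℝ] Matrix (Fin 2) (Fin 2) ℂ where
  toFun u := u 0 • pauliX + u 1 • pauliY + u 2 • pauliZ
  map_add' u w := by simp only [Pi.add_apply, add_smul]; abel
  map_smul' c u := by simp only [Pi.smul_apply, smul_eq_mul, mul_smul, smul_add, RingHom.id_apply]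

lemma pauliVec_apply (u : Fin 3 → ℝ) :
    pauliVec u = u 0 • pauliX + u 1 • pauliY + u 2 • pauliZ := rfl

lemma pauliVec_isHermitian (u : Fin 3 → ℝ) : (pauliVec u).IsHermitian := by
  ext i j
  fin_cases i <;> fin_cases j <;>
    simp [pauliVec_apply, pauliX, pauliY, pauliZ]

lemma trace_pauliVec (u : Fin 3 → ℝ) : (pauliVec u).trace = 0 := by
  simp [pauliVec_apply, pauliX, pauliY, pauliZ, trace_fin_two]

lemma pauliVec_mul_self (u : Fin 3 → ℝ) :
    pauliVec u * pauliVec u = (u ⬝ᵥ u : ℝ) • (1 : Matrix (Fin 2) (Fin 2) ℂ) := by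
  ext i j
  fin_cases i <;> fin_cases j <;>
    simp [pauliVec_apply, pauliX, pauliY, pauliZ, mul_apply, dotProduct, Fin.sum_univ_three,
      Complex.ext_iff, mul_comm]
  ring

lemma trace_pauliVec_mul_pauliVec (u w : Fin 3 → ℝ) :
    (pauliVec u * pauliVec w).trace = 2 * (u ⬝ᵥ w : ℝ) := by
  simp [pauliVec_apply, pauliX, pauliY, pauliZ, trace_fin_two, dotProduct,
    Fin.sum_univ_three, Complex.ext_iff]
  constructor <;> ring

noncomputable def blochState (u : Fin 3 → ℝ) : Matrix (Fin 2) (Fin 2) ℂ :=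
  (1 / 2 : ℝ) • (1 + pauliVec u)

lemma blochState_eq (u : Fin 3 → ℝ) :
    (1 / 2 : ℝ) • (1 + u 0 • pauliX + u 1 • pauliY + u 2 • pauliZ) = blochState u := by
  simp only [blochState, pauliVec_apply, add_assoc]

lemma trace_blochState (u : Fin 3 → ℝ) : (blochState u).trace = 1 := by
  simp [blochState, trace_pauliVec]

lemma trace_pauliVec_mul_blochState (u w : Fin 3 → ℝ) :
    (pauliVec u * blochState w).trace = (u ⬝ᵥ w : ℝ) := by
  simp only [blochState, mul_smul_comm, mul_add, mul_one, trace_smul, trace_add, trace_pauliVec,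
    trace_pauliVec_mul_pauliVec, Complex.real_smul]
  push_cast
  ring

lemma pauliVec_eq_one_sub_blochState_neg (u : Fin 3 → ℝ) :
    pauliVec u = 1 - (2 : ℝ) • blochState (-u) := by
  simp only [blochState, map_neg, smul_smul]
  norm_num

lemma blochState_lineMap (t : ℝ) (u w : Fin 3 → ℝ) :
    (1 - t) • blochState u + t • blochState w = blochState ((1 - t) • u + t • w) := by
  simp only [blochState, map_add, map_smul]
  module

lemma blochState_posSemidef {u : Fin 3 → ℝ} (hu : u ⬝ᵥ u ≤ 1) : (blochState u).PosSemidef := by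
  set X := 1 + pauliVec u
  have hX : X.IsHermitian := isHermitian_one.add (pauliVec_isHermitian u)
  have key : blochState u = (1 / 4 : ℝ) • (Xᴴ * X + (1 - u ⬝ᵥ u) • 1) := by
    rw [hX.eq]
    simp only [X, blochState, add_mul, mul_add, one_mul, mul_one, pauliVec_mul_self]
    module
  rw [key]
  exact ((posSemidef_conjTranspose_mul_self X).add (PosSemidef.one.smul (sub_nonneg.2 hu))).smul
    (by norm_num)

lemma re_trace_pauliVec_mul_le_one {u : Fin 3 → ℝ} (hu : u ⬝ᵥ u ≤ 1)
    {τ : Matrix (Fin 2) (Fin 2) ℂ} (hτ : IsDensity τ) : (pauliVec u * τ).trace.re ≤ 1 := by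
  have hnonneg : 0 ≤ (blochState (-u) * τ).trace :=
    (blochState_posSemidef (by simpa using hu)).trace_mul_nonneg_s10 hτ.1
  have htrace : (pauliVec u * τ).trace = 1 - (2 : ℝ) • (blochState (-u) * τ).trace := by
    rw [pauliVec_eq_one_sub_blochState_neg, sub_mul, one_mul, trace_sub, smul_mul_assoc,
      trace_smul, hτ.2]
  rw [htrace, Complex.sub_re, Complex.one_re, Complex.smul_re, smul_eq_mul]
  linarith [(Complex.nonneg_iff.mp hnonneg).1]

lemma mul_dotProduct_sub_le_of_mix_eq {u r s : Fin 3 → ℝ} (hu : u ⬝ᵥ u ≤ 1) {t : ℝ}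
    (ht : 0 ≤ t) {ρ' σ' : Matrix (Fin 2) (Fin 2) ℂ} (hρ' : IsDensity ρ') (hσ' : IsDensity σ')
    (heq : (1 - t) • blochState r + t • ρ' = (1 - t) • blochState s + t • σ') :
    (1 - t) * (u ⬝ᵥ (r - s)) ≤ 2 * t := by
  have hpair := congrArg (fun M => (pauliVec u * M).trace.re) heq
  simp only [mul_add, mul_smul_comm, trace_add, trace_smul, trace_pauliVec_mul_blochState,
    Complex.add_re, Complex.real_smul, Complex.re_ofReal_mul, Complex.ofReal_re] at hpair
  have hρ'_bound : -(pauliVec u * ρ').trace.re ≤ 1 := by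
    simpa [map_neg, neg_mul] using re_trace_pauliVec_mul_le_one (u := -u) (by simpa using hu) hρ'
  have hσ'_bound := re_trace_pauliVec_mul_le_one hu hσ'
  rw [dotProduct_sub]
  nlinarith

theorem stateRobustness_blochState (r s : Fin 3 → ℝ) :
    StateRobustness (blochState r) (blochState s) =
      √((r - s) ⬝ᵥ (r - s)) / (√((r - s) ⬝ᵥ (r - s)) + 2) := by
  obtain ⟨u, huu, hdu, huv⟩ := exists_dotProduct_self_le_one_smul_eq (r - s)
  set d := √((r - s) ⬝ᵥ (r - s))
  have hd : 0 ≤ d := Real.sqrt_nonneg _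
  have hdensity (w : Fin 3 → ℝ) (hw : w ⬝ᵥ w ≤ 1) : IsDensity (blochState w) :=
    ⟨blochState_posSemidef hw, trace_blochState w⟩
  refine IsLeast.csInf_eq ⟨⟨⟨by positivity, div_le_one_of_le₀ (by linarith) (by linarith)⟩,
    blochState (-u), blochState u, hdensity _ (by simpa using huu), hdensity u huu, ?_⟩, ?_⟩
  · have hcompl : 1 - d / (d + 2) = 2 / (d + 2) := by field_simp; ring
    have hr : r = s + d • u := by rw [hdu]; abel
    rw [blochState_lineMap, blochState_lineMap, hcompl, hr]
    congr 1
    module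
  · rintro t ⟨⟨ht0, -⟩, ρ', σ', hρ', hσ', heq⟩
    have hsep := mul_dotProduct_sub_le_of_mix_eq huu ht0 hρ' hσ' heq
    rw [huv] at hsep
    rw [div_le_iff₀ (by positivity)]
    linarith

end Qubit

theorem stmt10_general (r s : Fin 3 → ℝ)
    (ρ σ : Matrix (Fin 2) (Fin 2) ℂ)
    (hρdef : ρ = (1/2 : ℝ) • (1 + r 0 • pauliX + r 1 • pauliY + r 2 • pauliZ))
    (hσdef : σ = (1/2 : ℝ) • (1 + s 0 • pauliX + s 1 • pauliY + s 2 • pauliZ)) :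
    StateRobustness ρ σ =
      Real.sqrt (∑ i, (r i - s i) ^ 2) / (Real.sqrt (∑ i, (r i - s i) ^ 2) + 2) := by
  have hsum : ∑ i, (r i - s i) ^ 2 = (r - s) ⬝ᵥ (r - s) := by simp [dotProduct, sq]
  rw [hρdef, hσdef, Qubit.blochState_eq, Qubit.blochState_eq, hsum,
    Qubit.stateRobustness_blochState]

/-- for qubit states with Bloch vectors `r`, `s`, the robustness of
state incompatibility equals `‖r−s‖/(‖r−s‖+2)` (Euclidean norm). -/
theorem stmt10 (r s : Fin 3 → ℝ)
    (ρ σ : Matrix (Fin 2) (Fin 2) ℂ)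
    (hρdef : ρ = (1/2 : ℝ) • (1 + r 0 • pauliX + r 1 • pauliY + r 2 • pauliZ))
    (hσdef : σ = (1/2 : ℝ) • (1 + s 0 • pauliX + s 1 • pauliY + s 2 • pauliZ))
    (hρ : IsDensity ρ) (hσ : IsDensity σ) :
    StateRobustness ρ σ =
      Real.sqrt (∑ i, (r i - s i) ^ 2) / (Real.sqrt (∑ i, (r i - s i) ^ 2) + 2) :=
  stmt10_general r s ρ σ hρdef hσdef
end

section
/- For the robustness of state incompatibility, the optimal added states can be chosen orthogonal: given density operators ρ ≠ σ, set Δ = (σ−ρ)/‖σ−ρ‖₁ with Jordan decomposition Δ = Δ₊ − Δ₋; then ρ̃ := 2Δ₊ and σ̃ := 2Δ₋ are density operators satisfying ρ̃σ̃ = 0, ‖ρ̃−σ̃‖₁ = 2, and (1−λ*)ρ + λ*ρ̃ = (1−λ*)σ + λ*σ̃ for λ* = ‖ρ−σ‖₁/(‖ρ−σ‖₁+2). -/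
open Matrix Finset
open scoped Kronecker ComplexOrder

/-! With `t = ‖σ - ρ‖₁ > 0`, put `Δ = Δ₊ - Δ₋ = t⁻¹ (σ - ρ)`. Since `Δ₊ Δ₋ = 0 = Δ₋ Δ₊`, the
matrices `Δ₊ - Δ₋` and `Δ₊ + Δ₋` have the same square, so `1 = ‖Δ‖₁ = ‖Δ₊ + Δ₋‖₁ = tr Δ₊ + tr Δ₋`,
while `tr Δ = 0` because `ρ` and `σ` have unit trace; hence `tr Δ₊ = tr Δ₋ = 1/2`. The mixture
identity is then linear algebra from `σ - ρ = t (Δ₊ - Δ₋)`. The trace norm is handled through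
`‖X‖₁ = tr √(Xᴴ X)`, with the square root of the continuous functional calculus. -/
section

open scoped MatrixOrder

variable {n : Type*} [Fintype n] [DecidableEq n]

lemma traceNorm_eq_trace_sqrt (X : Matrix n n ℂ) :
    (traceNorm X : ℂ) = (CFC.sqrt (Xᴴ * X)).trace := by
  have hX := Matrix.posSemidef_conjTranspose_mul_self X
  rw [CFC.sqrt_eq_real_sqrt _ hX.nonneg, cfcₙ_eq_cfc, hX.1.cfc_eq, Matrix.IsHermitian.cfc,
    Unitary.conjStarAlgAut_apply, Matrix.trace_mul_cycle, Unitary.coe_star_mul_self, one_mul,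
    Matrix.trace_diagonal, traceNorm]
  push_cast
  rfl

lemma traceNorm_congr {X Y : Matrix n n ℂ} (h : Xᴴ * X = Yᴴ * Y) :
    traceNorm X = traceNorm Y := by
  exact_mod_cast (traceNorm_eq_trace_sqrt X).trans (h ▸ (traceNorm_eq_trace_sqrt Y).symm)

lemma traceNorm_neg (X : Matrix n n ℂ) : traceNorm (-X) = traceNorm X :=
  traceNorm_congr (by simp)

lemma traceNorm_nonneg (X : Matrix n n ℂ) : 0 ≤ traceNorm X :=
  Finset.sum_nonneg fun _ _ => Real.sqrt_nonneg _

lemma Matrix.PosSemidef.traceNorm_eq_trace {A : Matrix n n ℂ} (hA : A.PosSemidef) :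
    (traceNorm A : ℂ) = A.trace := by
  rw [traceNorm_eq_trace_sqrt, hA.1.eq, CFC.sqrt_mul_self A hA.nonneg]

lemma traceNorm_smul {c : ℝ} (hc : 0 ≤ c) (X : Matrix n n ℂ) :
    traceNorm (c • X) = c * traceNorm X := by
  have hX := Matrix.posSemidef_conjTranspose_mul_self X
  have hsqrt : CFC.sqrt ((c • X)ᴴ * (c • X)) = c • CFC.sqrt (Xᴴ * X) := by
    refine CFC.sqrt_unique ?_ (smul_nonneg hc (CFC.sqrt_nonneg _))
    rw [smul_mul_smul_comm, CFC.sqrt_mul_sqrt_self _ hX.nonneg, Matrix.conjTranspose_smul,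
      star_trivial, smul_mul_smul_comm]
  have h := traceNorm_eq_trace_sqrt (c • X)
  rw [hsqrt, Matrix.trace_smul, ← traceNorm_eq_trace_sqrt, Complex.real_smul] at h
  exact_mod_cast h

lemma traceNorm_eq_zero_iff {X : Matrix n n ℂ} : traceNorm X = 0 ↔ X = 0 := by
  have hX := Matrix.posSemidef_conjTranspose_mul_self X
  rw [← Complex.ofReal_eq_zero, traceNorm_eq_trace_sqrt,
    (CFC.sqrt_nonneg (Xᴴ * X)).posSemidef.trace_eq_zero_iff, CFC.sqrt_eq_zero_iff _ hX.nonneg,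
    Matrix.conjTranspose_mul_self_eq_zero]

lemma traceNorm_pos {X : Matrix n n ℂ} (hX : X ≠ 0) : 0 < traceNorm X :=
  (traceNorm_nonneg X).lt_of_ne' (traceNorm_eq_zero_iff.not.mpr hX)

lemma Matrix.PosSemidef.traceNorm_sub_eq_trace_add {P Q : Matrix n n ℂ} (hP : P.PosSemidef)
    (hQ : Q.PosSemidef) (hPQ : P * Q = 0) : (traceNorm (P - Q) : ℂ) = P.trace + Q.trace := by
  have hQP : Q * P = 0 := by
    simpa [hP.1.eq, hQ.1.eq] using congrArg Matrix.conjTranspose hPQ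
  have hsq : (P - Q)ᴴ * (P - Q) = (P + Q)ᴴ * (P + Q) := by
    simp only [Matrix.conjTranspose_sub, Matrix.conjTranspose_add, hP.1.eq, hQ.1.eq,
      sub_mul, mul_sub, add_mul, mul_add, hPQ, hQP]
    abel
  rw [traceNorm_congr hsq, (hP.add hQ).traceNorm_eq_trace, Matrix.trace_add]

lemma Matrix.PosSemidef.trace_eq_half_of_traceNorm_sub_eq_one {P Q : Matrix n n ℂ}
    (hP : P.PosSemidef) (hQ : Q.PosSemidef) (hPQ : P * Q = 0)
    (hnorm : traceNorm (P - Q) = 1) (htr : (P - Q).trace = 0) :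
    P.trace = 1 / 2 ∧ Q.trace = 1 / 2 := by
  have hsum := hP.traceNorm_sub_eq_trace_add hQ hPQ
  rw [hnorm, Complex.ofReal_one] at hsum
  rw [Matrix.trace_sub] at htr
  exact ⟨by linear_combination (htr - hsum) / 2, by linear_combination (-htr - hsum) / 2⟩

end

/-- the optimal added states in the robustness of state
incompatibility can be chosen orthogonal, via the Jordan decomposition of
`Δ = (σ−ρ)/‖σ−ρ‖₁`. -/
theorem stmt13 {n : Type*} [Fintype n] [DecidableEq n]
    (ρ σ : Matrix n n ℂ) (hρ : IsDensity ρ) (hσ : IsDensity σ) (hne : ρ ≠ σ)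
    (Δp Δm : Matrix n n ℂ) (hp : Δp.PosSemidef) (hm : Δm.PosSemidef)
    (horth : Δp * Δm = 0)
    (hJordan : (traceNorm (σ - ρ))⁻¹ • (σ - ρ) = Δp - Δm) :
    IsDensity ((2:ℝ) • Δp) ∧ IsDensity ((2:ℝ) • Δm) ∧
    ((2:ℝ) • Δp) * ((2:ℝ) • Δm) = 0 ∧
    traceNorm ((2:ℝ) • Δp - (2:ℝ) • Δm) = 2 ∧
    (1 - traceNorm (ρ - σ) / (traceNorm (ρ - σ) + 2)) • ρ +
        (traceNorm (ρ - σ) / (traceNorm (ρ - σ) + 2)) • ((2:ℝ) • Δp) =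
      (1 - traceNorm (ρ - σ) / (traceNorm (ρ - σ) + 2)) • σ +
        (traceNorm (ρ - σ) / (traceNorm (ρ - σ) + 2)) • ((2:ℝ) • Δm) := by
  rw [← neg_sub σ ρ, traceNorm_neg]
  set t := traceNorm (σ - ρ)
  have ht : 0 < t := traceNorm_pos (sub_ne_zero.mpr hne.symm)
  have hnorm : traceNorm (Δp - Δm) = 1 := by
    rw [← hJordan, traceNorm_smul (inv_nonneg.mpr ht.le), inv_mul_cancel₀ ht.ne']
  have htr : (Δp - Δm).trace = 0 := by
    rw [← hJordan, Matrix.trace_smul, Matrix.trace_sub, hρ.2, hσ.2, sub_self, smul_zero]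
  obtain ⟨hp_tr, hm_tr⟩ := hp.trace_eq_half_of_traceNorm_sub_eq_one hm horth hnorm htr
  have hσ_eq : σ = ρ + t • (Δp - Δm) := by
    rw [← hJordan, smul_smul, mul_inv_cancel₀ ht.ne', one_smul, add_sub_cancel]
  refine ⟨⟨hp.smul zero_le_two, ?_⟩, ⟨hm.smul zero_le_two, ?_⟩, ?_, ?_, ?_⟩
  · rw [Matrix.trace_smul, hp_tr]; norm_num
  · rw [Matrix.trace_smul, hm_tr]; norm_num
  · rw [smul_mul_smul_comm, horth, smul_zero]
  · rw [← smul_sub, traceNorm_smul zero_le_two, hnorm, mul_one]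
  · rw [hσ_eq]
    match_scalars <;> field_simp <;> ring
end

section
/- If two testers A and B share the same pure normalization state ρ = |ψ⟩⟨ψ|, then their robustness of incompatibility equals the robustness of incompatibility of their canonical POVMs: R_T(A,B) = R_M(P,Q). In particular, A_j = a_j ⊗ |ψ⟩⟨ψ| and B_k = b_k ⊗ |ψ⟩⟨ψ| for POVMs {a_j}, {b_k} on H_1, and P ≅ {a_j}, Q ≅ {b_k}. -/
open Matrix Finset
open scoped Kronecker ComplexOrder

/-!
Since `ρ = |ψ⟩⟨ψ|` is a projection, `invSqrt ρ = suppProj ρ = ρ`, and each effect of a tester,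
lying between `0` and `1 ⊗ ρ`, is fixed by compression with `1 ⊗ ρ`. Hence the canonical POVMs
are the testers themselves, with unit `1 ⊗ ρ`, and `A j = a j ⊗ ρ` with `a j = V† (A j) V` for
the isometry `V x = x ⊗ ψ`.

A POVM noise is a tester noise with all normalization states equal to `ρ`. Conversely, compressing
a tester with state `σ` by `1 ⊗ ρ` gives effects summing to `⟨ψ|σ|ψ⟩ (1 ⊗ ρ)`, with
`⟨ψ|σ|ψ⟩ ≤ tr σ = 1`; padding every effect with an equal share of the missing
`(1 - ⟨ψ|σ|ψ⟩) (1 ⊗ ρ)` gives a POVM with unit `1 ⊗ ρ`. Applied to both noises and to the joint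
tester, this preserves the marginal relations, because the marginals force
`1 - ⟨ψ|τ|ψ⟩ = λ (1 - ⟨ψ|ρ'|ψ⟩) = λ (1 - ⟨ψ|σ'|ψ⟩)`.
-/

section StarProjection

variable {k l : Type*} [Fintype k] [Fintype l]

lemma isStarProjection_vecMulVec_star {ψ : k → ℂ} (hψ : star ψ ⬝ᵥ ψ = 1) :
    IsStarProjection (vecMulVec ψ (star ψ)) where
  isIdempotentElem := by
    rw [IsIdempotentElem, vecMulVec_mul_vecMulVec, hψ, one_smul]
  isSelfAdjoint := by
    rw [IsSelfAdjoint, star_eq_conjTranspose, conjTranspose_vecMulVec, star_star]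

lemma IsStarProjection.kronecker {p : Matrix k k ℂ} {q : Matrix l l ℂ}
    (hp : IsStarProjection p) (hq : IsStarProjection q) : IsStarProjection (p ⊗ₖ q) where
  isIdempotentElem := by
    rw [IsIdempotentElem, ← mul_kronecker_mul, hp.isIdempotentElem.eq, hq.isIdempotentElem.eq]
  isSelfAdjoint := by
    rw [IsSelfAdjoint, star_eq_conjTranspose, conjTranspose_kronecker,
      ← star_eq_conjTranspose, ← star_eq_conjTranspose, hp.isSelfAdjoint.star_eq,
      hq.isSelfAdjoint.star_eq]

lemma IsStarProjection.trace_mul_mul_le [DecidableEq k] {p σ : Matrix k k ℂ}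
    (hp : IsStarProjection p) (hσ : σ.PosSemidef) : (p * σ * p).trace ≤ σ.trace := by
  have hcompress {q : Matrix k k ℂ} (hq : IsIdempotentElem q) :
      (q * σ * q).trace = (q * σ).trace := by
    rw [trace_mul_comm, ← Matrix.mul_assoc, hq.eq]
  have hq := hp.one_sub
  have hsplit : σ.trace = (p * σ * p).trace + ((1 - p) * σ * (1 - p)).trace := by
    rw [hcompress hp.isIdempotentElem, hcompress hq.isIdempotentElem, Matrix.sub_mul,
      Matrix.one_mul, trace_sub, add_sub_cancel]
  have hrest : 0 ≤ ((1 - p) * σ * (1 - p)).trace := by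
    have h := hσ.conjTranspose_mul_mul_same (1 - p)
    rw [← star_eq_conjTranspose, hq.isSelfAdjoint.star_eq] at h
    exact h.trace_nonneg
  rw [hsplit]
  exact le_add_of_nonneg_right hrest

lemma Matrix.IsHermitian.eigenvalues_eq_zero_or_one [DecidableEq k] {p : Matrix k k ℂ}
    (hp : p.IsHermitian) (hp' : IsIdempotentElem p) (i : k) :
    hp.eigenvalues i = 0 ∨ hp.eigenvalues i = 1 :=
  hp'.spectrum_subset ℝ (hp.eigenvalues_mem_spectrum_real i)

/-- Any spectral function fixing `0` and `1` fixes a projection. -/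
lemma Matrix.IsHermitian.eigenvectorUnitary_mul_diagonal_mul_eq_self [DecidableEq k]
    {p : Matrix k k ℂ} (hp : p.IsHermitian) (hp' : IsIdempotentElem p) {f : ℝ → ℂ}
    (hf0 : f 0 = 0) (hf1 : f 1 = 1) :
    (hp.eigenvectorUnitary : Matrix k k ℂ) * diagonal (fun i => f (hp.eigenvalues i)) *
      (hp.eigenvectorUnitary : Matrix k k ℂ)ᴴ = p := by
  have hf : (fun i => f (hp.eigenvalues i)) = RCLike.ofReal ∘ hp.eigenvalues := by
    funext i
    rcases hp.eigenvalues_eq_zero_or_one hp' i with h | h <;> simp [h, hf0, hf1]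
  conv_rhs => rw [hp.spectral_theorem]
  rw [hf, Unitary.conjStarAlgAut_apply, star_eq_conjTranspose]

lemma invSqrt_eq_self [DecidableEq k] {p : Matrix k k ℂ} (hp : p.IsHermitian)
    (hp' : IsIdempotentElem p) : invSqrt hp = p :=
  hp.eigenvectorUnitary_mul_diagonal_mul_eq_self hp'
    (f := fun x => if x = 0 then 0 else ((Real.sqrt x)⁻¹ : ℝ)) (by simp) (by simp)

lemma suppProj_eq_self [DecidableEq k] {p : Matrix k k ℂ} (hp : p.IsHermitian)
    (hp' : IsIdempotentElem p) : suppProj hp = p :=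
  hp.eigenvectorUnitary_mul_diagonal_mul_eq_self hp' (f := fun x => if x = 0 then 0 else 1)
    (by simp) (by simp)

end StarProjection

section POVMs

variable {k : Type*} {S S' : Type*} [Fintype S] [Fintype S']

open scoped MatrixOrder Matrix.Norms.L2Operator in
/-- Effects lie between `0` and the unit, hence in the range of the unit when it is a projection. -/
lemma IsPOVMOn.mul_mul_eq_self [Fintype k] [DecidableEq k] {e : Matrix k k ℂ}
    {P : S → Matrix k k ℂ} (hP : IsPOVMOn e P) (he : IsStarProjection e) (j : S) :
    e * P j * e = P j := by
  have hnonneg (i : S) : 0 ≤ P i := nonneg_iff_posSemidef.2 (hP.1 i)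
  refine he.conjugate_of_nonneg_of_le (hnonneg j) ?_
  rw [← hP.2]
  exact Finset.single_le_sum (fun i _ => hnonneg i) (Finset.mem_univ j)

lemma IsPOVMOn.nonempty {e : Matrix k k ℂ} {P : S → Matrix k k ℂ} (hP : IsPOVMOn e P)
    (he : e ≠ 0) : Nonempty S := by
  obtain ⟨j, -, -⟩ := Finset.exists_ne_zero_of_sum_ne_zero (hP.2 ▸ he)
  exact ⟨j⟩

open scoped MatrixOrder in
lemma isPOVMOn_mul_mul_add_uniform [Fintype k] [DecidableEq k] [Nonempty S] {e : Matrix k k ℂ}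
    (he : IsStarProjection e) {X : S → Matrix k k ℂ} (hX : ∀ j, (X j).PosSemidef) {c : ℂ}
    (hc : c ≤ 1) (hsum : ∑ j, e * X j * e = c • e) :
    IsPOVMOn e (fun j => e * X j * e + ((1 - c) / Fintype.card S) • e) := by
  have hcompress (j : S) : (e * X j * e).PosSemidef := nonneg_iff_posSemidef.1 <|
    he.isSelfAdjoint.conjugate_nonneg (nonneg_iff_posSemidef.2 (hX j))
  have hcoef : 0 ≤ (1 - c) / Fintype.card S := div_nonneg (sub_nonneg.2 hc) (Nat.cast_nonneg _)
  refine ⟨fun j => (hcompress j).add ((nonneg_iff_posSemidef.1 he.nonneg).smul hcoef), ?_⟩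
  rw [Finset.sum_add_distrib, hsum, Finset.sum_const, Finset.card_univ,
    ← Nat.cast_smul_eq_nsmul ℂ, smul_smul,
    mul_div_cancel₀ _ (Nat.cast_ne_zero.2 Fintype.card_ne_zero), ← add_smul, add_sub_cancel,
    one_smul]

lemma povmLambdaCompatibleOn_zero {P : S → Matrix k k ℂ} {Q : S' → Matrix k k ℂ}
    (hP : ∀ j, P j = 0) (hQ : ∀ j, Q j = 0) (lam : ℝ) : POVMLambdaCompatibleOn 0 P Q lam := by
  refine ⟨0, 0, ⟨fun _ => .zero, ?_⟩, ⟨fun _ => .zero, ?_⟩, 0, ⟨fun _ => .zero, ?_⟩, ?_, ?_⟩ <;>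
    simp [hP, hQ]

lemma sum_mul_mul_add_smul [Fintype k] {T : Type*} [Fintype T] {P A N : Matrix k k ℂ}
    {C : T → Matrix k k ℂ} {lam : ℝ} {r d : ℂ} (hC : ∑ t, C t = (1 - lam) • A + lam • N)
    (hPA : P * A * P = A) (hr : (Fintype.card T : ℂ) * r = lam * d) :
    ∑ t, (P * C t * P + r • P) = (1 - lam) • A + lam • (P * N * P + d • P) := by
  rw [Finset.sum_add_distrib, ← Finset.sum_mul, ← Finset.mul_sum, hC, Finset.sum_const,
    Finset.card_univ, ← Nat.cast_smul_eq_nsmul ℂ, smul_smul, hr, Matrix.mul_add, Matrix.add_mul,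
    Matrix.mul_smul, Matrix.smul_mul, hPA, Matrix.mul_smul, Matrix.smul_mul, ← Complex.coe_smul]
  module

end POVMs

section Testers

variable {n m : Type*} [DecidableEq m] {S : Type*} [Fintype S]

lemma vecMulVec_star_mul_mul_vecMulVec_star [Fintype n] (ψ : n → ℂ) (σ : Matrix n n ℂ) :
    vecMulVec ψ (star ψ) * σ * vecMulVec ψ (star ψ)
      = (star ψ ⬝ᵥ σ *ᵥ ψ) • vecMulVec ψ (star ψ) := by
  rw [vecMulVec_mul, vecMulVec_mul_vecMulVec, ← dotProduct_mulVec, vecMulVec_smul]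

lemma IsDensity.dotProduct_mulVec_le_one [Fintype n] [DecidableEq n] {ψ : n → ℂ}
    (hψ : star ψ ⬝ᵥ ψ = 1) {σ : Matrix n n ℂ} (hσ : IsDensity σ) : star ψ ⬝ᵥ σ *ᵥ ψ ≤ 1 := by
  have h := (isStarProjection_vecMulVec_star hψ).trace_mul_mul_le hσ.1
  rwa [vecMulVec_star_mul_mul_vecMulVec_star, trace_smul, trace_vecMulVec, dotProduct_comm ψ, hψ,
    smul_eq_mul, mul_one, hσ.2] at h

lemma isStarProjection_one_kronecker_vecMulVec_star [Fintype n] [Fintype m] {ψ : n → ℂ}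
    (hψ : star ψ ⬝ᵥ ψ = 1) : IsStarProjection ((1 : Matrix m m ℂ) ⊗ₖ vecMulVec ψ (star ψ)) :=
  (IsStarProjection.one _).kronecker (isStarProjection_vecMulVec_star hψ)

lemma sum_kronecker_vecMulVec_mul_mul_eq_smul [Fintype n] [Fintype m] {T : Type*}
    [Fintype T] {X : T → Matrix (m × n) (m × n) ℂ} {σ : Matrix n n ℂ}
    (hX : ∑ t, X t = (1 : Matrix m m ℂ) ⊗ₖ σ) (ψ : n → ℂ) :
    ∑ t, ((1 : Matrix m m ℂ) ⊗ₖ vecMulVec ψ (star ψ)) * X t *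
        ((1 : Matrix m m ℂ) ⊗ₖ vecMulVec ψ (star ψ))
      = (star ψ ⬝ᵥ σ *ᵥ ψ) • ((1 : Matrix m m ℂ) ⊗ₖ vecMulVec ψ (star ψ)) := by
  rw [← Finset.sum_mul, ← Finset.mul_sum, hX, ← mul_kronecker_mul, ← mul_kronecker_mul,
    Matrix.one_mul, Matrix.one_mul, vecMulVec_star_mul_mul_vecMulVec_star, kronecker_smul]

lemma IsTester.isPOVMOn [Fintype n] {A : S → Matrix (m × n) (m × n) ℂ} {ρ : Matrix n n ℂ}
    (hA : IsTester A ρ) : IsPOVMOn ((1 : Matrix m m ℂ) ⊗ₖ ρ) A :=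
  hA.2

lemma IsTester.canonicalPOVM_eq_self [Fintype n] [DecidableEq n] [Fintype m]
    {A : S → Matrix (m × n) (m × n) ℂ} {ρ : Matrix n n ℂ} (hA : IsTester A ρ) (hρ : ρ.IsHermitian)
    (hρ' : IsStarProjection ρ) :
    canonicalPOVM A hρ = A :=
  funext fun j => by
    rw [canonicalPOVM, invSqrt_eq_self hρ hρ'.isIdempotentElem,
      hA.isPOVMOn.mul_mul_eq_self ((IsStarProjection.one _).kronecker hρ') j]

lemma IsTester.sum_mix [Fintype n] {A N : S → Matrix (m × n) (m × n) ℂ} {ρ σ : Matrix n n ℂ}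
    (hA : IsTester A ρ) (hN : IsTester N σ) (lam : ℝ) :
    ∑ j, ((1 - lam) • A j + lam • N j) = (1 : Matrix m m ℂ) ⊗ₖ ((1 - lam) • ρ + lam • σ) := by
  rw [Finset.sum_add_distrib, ← Finset.smul_sum, ← Finset.smul_sum, hA.2.2, hN.2.2,
    kronecker_add, kronecker_smul, kronecker_smul]

lemma IsTester.isPOVMOn_compress_add_uniform [Fintype n] [DecidableEq n] [Fintype m]
    [Nonempty S] {T : S → Matrix (m × n) (m × n) ℂ} {σ : Matrix n n ℂ} (hT : IsTester T σ)
    {ψ : n → ℂ} (hψ : star ψ ⬝ᵥ ψ = 1) :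
    IsPOVMOn ((1 : Matrix m m ℂ) ⊗ₖ vecMulVec ψ (star ψ)) fun j =>
      ((1 : Matrix m m ℂ) ⊗ₖ vecMulVec ψ (star ψ)) * T j *
        ((1 : Matrix m m ℂ) ⊗ₖ vecMulVec ψ (star ψ)) +
      ((1 - star ψ ⬝ᵥ σ *ᵥ ψ) / Fintype.card S) • ((1 : Matrix m m ℂ) ⊗ₖ vecMulVec ψ (star ψ)) :=
  isPOVMOn_mul_mul_add_uniform (isStarProjection_one_kronecker_vecMulVec_star hψ) hT.2.1
    (hT.1.dotProduct_mulVec_le_one hψ) (sum_kronecker_vecMulVec_mul_mul_eq_smul hT.2.2 ψ)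

/-- The isometry `H₁ → H₁ ⊗ H₀`, `x ↦ x ⊗ ψ`. -/
def pureEmbedding (m : Type*) [DecidableEq m] (ψ : n → ℂ) : Matrix (m × n) m ℂ :=
  Matrix.of fun x i => (1 : Matrix m m ℂ) x.1 i * ψ x.2

lemma pureEmbedding_mul_mul_conjTranspose [Fintype m] (ψ : n → ℂ) (a : Matrix m m ℂ) :
    pureEmbedding m ψ * a * (pureEmbedding m ψ)ᴴ = a ⊗ₖ vecMulVec ψ (star ψ) := by
  ext ⟨i, p⟩ ⟨i', q⟩
  simp [pureEmbedding, mul_apply, conjTranspose_apply, one_apply, vecMulVec_apply,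
    apply_ite (starRingEnd ℂ), eq_comm]
  ring

lemma conjTranspose_pureEmbedding_mul_self [Fintype n] [Fintype m] {ψ : n → ℂ}
    (hψ : star ψ ⬝ᵥ ψ = 1) :
    (pureEmbedding m ψ)ᴴ * pureEmbedding m ψ = 1 := by
  ext i i'
  simp [pureEmbedding, mul_apply, conjTranspose_apply, one_apply, Fintype.sum_prod_type,
    apply_ite (starRingEnd ℂ), show ∑ x, (starRingEnd ℂ) (ψ x) * ψ x = 1 from hψ, eq_comm]

lemma IsTester.exists_eq_kronecker [Fintype n] [DecidableEq n] [Fintype m]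
    {A : S → Matrix (m × n) (m × n) ℂ} {ψ : n → ℂ} (hψ : star ψ ⬝ᵥ ψ = 1)
    (hA : IsTester A (vecMulVec ψ (star ψ))) :
    ∃ a : S → Matrix m m ℂ, IsPOVMOn 1 a ∧ ∀ j, A j = a j ⊗ₖ vecMulVec ψ (star ψ) := by
  set V := pureEmbedding m ψ
  have hVV : Vᴴ * V = 1 := conjTranspose_pureEmbedding_mul_self hψ
  have hP : V * Vᴴ = (1 : Matrix m m ℂ) ⊗ₖ vecMulVec ψ (star ψ) := by
    rw [← pureEmbedding_mul_mul_conjTranspose, Matrix.mul_one]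
  refine ⟨fun j => Vᴴ * A j * V, ⟨fun j => (hA.2.1 j).conjTranspose_mul_mul_same V, ?_⟩,
    fun j => ?_⟩
  · rw [← Matrix.sum_mul, ← Matrix.mul_sum, hA.2.2, ← hP, Matrix.mul_assoc, Matrix.mul_assoc, hVV,
      Matrix.mul_one, hVV]
  · calc A j = ((1 : Matrix m m ℂ) ⊗ₖ vecMulVec ψ (star ψ)) * A j *
          ((1 : Matrix m m ℂ) ⊗ₖ vecMulVec ψ (star ψ)) :=
          (hA.isPOVMOn.mul_mul_eq_self (isStarProjection_one_kronecker_vecMulVec_star hψ) j).symm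
      _ = V * (Vᴴ * A j * V) * Vᴴ := by rw [← hP]; simp only [Matrix.mul_assoc]
      _ = (Vᴴ * A j * V) ⊗ₖ vecMulVec ψ (star ψ) := pureEmbedding_mul_mul_conjTranspose ψ _

end Testers

section Robustness

variable {n m : Type*} [Fintype n] [DecidableEq m] {S S' : Type*} [Fintype S] [Fintype S']
  {A : S → Matrix (m × n) (m × n) ℂ} {B : S' → Matrix (m × n) (m × n) ℂ}

lemma TesterLambdaCompatible.of_povmLambdaCompatibleOn {ρ : Matrix n n ℂ} (hρ : IsDensity ρ)
    {lam : ℝ} (h : POVMLambdaCompatibleOn ((1 : Matrix m m ℂ) ⊗ₖ ρ) A B lam) :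
    TesterLambdaCompatible A B lam := by
  obtain ⟨JA, JB, hJA, hJB, R, hR, hRA, hRB⟩ := h
  exact ⟨JA, JB, ρ, ρ, ⟨hρ, hJA⟩, ⟨hρ, hJB⟩, R, ρ, ⟨hρ, hR⟩, hRA, hRB⟩

lemma POVMLambdaCompatibleOn.of_testerLambdaCompatible [DecidableEq n] [Fintype m]
    {ψ : n → ℂ} (hψ : star ψ ⬝ᵥ ψ = 1) (hA : IsTester A (vecMulVec ψ (star ψ)))
    (hB : IsTester B (vecMulVec ψ (star ψ))) {lam : ℝ} (h : TesterLambdaCompatible A B lam) :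
    POVMLambdaCompatibleOn ((1 : Matrix m m ℂ) ⊗ₖ vecMulVec ψ (star ψ)) A B lam := by
  obtain ⟨NA, NB, ρA, ρB, hNA, hNB, C, τ, hC, hCA, hCB⟩ := h
  have hP := isStarProjection_one_kronecker_vecMulVec_star (m := m) hψ
  have hPA := hA.isPOVMOn.mul_mul_eq_self hP
  have hPB := hB.isPOVMOn.mul_mul_eq_self hP
  set ρ := vecMulVec ψ (star ψ)
  set P := (1 : Matrix m m ℂ) ⊗ₖ ρ
  rcases eq_or_ne P 0 with hP0 | hP0
  · rw [hP0] at hPA hPB ⊢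
    exact povmLambdaCompatibleOn_zero (fun j => by simpa using (hPA j).symm)
      (fun k => by simpa using (hPB k).symm) lam
  have := hA.isPOVMOn.nonempty hP0
  have := hB.isPOVMOn.nonempty hP0
  -- each marginal condition pins down `⟨ψ|τ|ψ⟩`; this is where `1 ⊗ ρ ≠ 0` is needed
  have hτ (ρ' : Matrix n n ℂ)
      (hρ' : ∑ x, C x = (1 : Matrix m m ℂ) ⊗ₖ ((1 - lam) • ρ + lam • ρ')) :
      1 - star ψ ⬝ᵥ τ *ᵥ ψ = lam * (1 - star ψ ⬝ᵥ ρ' *ᵥ ψ) := by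
    rw [smul_left_injective ℂ hP0 ((sum_kronecker_vecMulVec_mul_mul_eq_smul hC.2.2 ψ).symm.trans
      (sum_kronecker_vecMulVec_mul_mul_eq_smul hρ' ψ))]
    simp only [add_mulVec, smul_mulVec, dotProduct_add, dotProduct_smul, ρ, vecMulVec_mulVec, hψ,
      MulOpposite.op_one, one_smul, Complex.real_smul, Complex.ofReal_sub, Complex.ofReal_one,
      mul_one]
    ring
  have hτA := hτ ρA (by rw [Fintype.sum_prod_type]; simp only [hCA]; exact hA.sum_mix hNA lam)
  have hτB := hτ ρB (by
    rw [Fintype.sum_prod_type, Finset.sum_comm]; simp only [hCB]; exact hB.sum_mix hNB lam)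
  refine ⟨_, _, hNA.isPOVMOn_compress_add_uniform hψ, hNB.isPOVMOn_compress_add_uniform hψ, _,
    hC.isPOVMOn_compress_add_uniform hψ, fun j => ?_, fun k => ?_⟩
  · refine sum_mul_mul_add_smul (hCA j) (hPA j) ?_
    rw [Fintype.card_prod, Nat.cast_mul, hτA]
    field_simp
  · refine sum_mul_mul_add_smul (hCB k) (hPB k) ?_
    rw [Fintype.card_prod, Nat.cast_mul, hτB]
    field_simp

lemma testerLambdaCompatible_iff [DecidableEq n] [Fintype m] {ψ : n → ℂ}
    (hψ : star ψ ⬝ᵥ ψ = 1) (hA : IsTester A (vecMulVec ψ (star ψ)))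
    (hB : IsTester B (vecMulVec ψ (star ψ))) (lam : ℝ) :
    TesterLambdaCompatible A B lam ↔
      POVMLambdaCompatibleOn ((1 : Matrix m m ℂ) ⊗ₖ vecMulVec ψ (star ψ)) A B lam :=
  ⟨.of_testerLambdaCompatible hψ hA hB, .of_povmLambdaCompatibleOn hA.1⟩

lemma testerRobustness_eq_povmRobustnessOn [DecidableEq n] [Fintype m] {ψ : n → ℂ}
    (hψ : star ψ ⬝ᵥ ψ = 1) (hA : IsTester A (vecMulVec ψ (star ψ)))
    (hB : IsTester B (vecMulVec ψ (star ψ))) :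
    TesterRobustness A B =
      POVMRobustnessOn ((1 : Matrix m m ℂ) ⊗ₖ vecMulVec ψ (star ψ)) A B := by
  simp only [TesterRobustness, POVMRobustnessOn, testerLambdaCompatible_iff hψ hA hB]

end Robustness

theorem stmt16_general {n m : Type*} [Fintype n] [DecidableEq n] [Fintype m] [DecidableEq m]
    {S S' : Type*} [Fintype S] [Fintype S']
    (A : S → Matrix (m × n) (m × n) ℂ) (B : S' → Matrix (m × n) (m × n) ℂ)
    (ψ : n → ℂ)
    (hA : IsTester A (Matrix.vecMulVec ψ (star ψ)))
    (hB : IsTester B (Matrix.vecMulVec ψ (star ψ))) :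
    TesterRobustness A B =
      POVMRobustnessOn ((1 : Matrix m m ℂ) ⊗ₖ suppProj hA.1.1.1)
        (canonicalPOVM A hA.1.1.1) (canonicalPOVM B hA.1.1.1) ∧
    (∃ a : S → Matrix m m ℂ, IsPOVMOn 1 a ∧
      ∀ j, A j = a j ⊗ₖ Matrix.vecMulVec ψ (star ψ)) ∧
    (∃ b : S' → Matrix m m ℂ, IsPOVMOn 1 b ∧
      ∀ k, B k = b k ⊗ₖ Matrix.vecMulVec ψ (star ψ)) := by
  have hψ : star ψ ⬝ᵥ ψ = 1 := by rw [dotProduct_comm, ← trace_vecMulVec]; exact hA.1.2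
  have hρ := isStarProjection_vecMulVec_star hψ
  refine ⟨?_, hA.exists_eq_kronecker hψ, hB.exists_eq_kronecker hψ⟩
  rw [hA.canonicalPOVM_eq_self _ hρ, hB.canonicalPOVM_eq_self _ hρ,
    suppProj_eq_self _ hρ.isIdempotentElem]
  exact testerRobustness_eq_povmRobustnessOn hψ hA hB

/-- for testers with the same *pure* normalization state
`ρ = |ψ⟩⟨ψ|`, the tester robustness equals the POVM robustness of the canonical
POVMs; moreover the tester operators factorize as `A_j = a_j ⊗ |ψ⟩⟨ψ|`,
`B_k = b_k ⊗ |ψ⟩⟨ψ|` for POVMs `a`, `b` on the output space. -/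
theorem stmt16 {n m : Type*} [Fintype n] [DecidableEq n] [Fintype m] [DecidableEq m]
    {S S' : Type*} [Fintype S] [Fintype S']
    (A : S → Matrix (m × n) (m × n) ℂ) (B : S' → Matrix (m × n) (m × n) ℂ)
    (ψ : n → ℂ) (hψ : ∑ i, ‖ψ i‖ ^ 2 = 1)
    (hA : IsTester A (Matrix.vecMulVec ψ (star ψ)))
    (hB : IsTester B (Matrix.vecMulVec ψ (star ψ))) :
    TesterRobustness A B =
      POVMRobustnessOn ((1 : Matrix m m ℂ) ⊗ₖ suppProj hA.1.1.1)
        (canonicalPOVM A hA.1.1.1) (canonicalPOVM B hA.1.1.1) ∧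
    (∃ a : S → Matrix m m ℂ, IsPOVMOn 1 a ∧
      ∀ j, A j = a j ⊗ₖ Matrix.vecMulVec ψ (star ψ)) ∧
    (∃ b : S' → Matrix m m ℂ, IsPOVMOn 1 b ∧
      ∀ k, B k = b k ⊗ₖ Matrix.vecMulVec ψ (star ψ)) :=
  stmt16_general A B ψ hA hB
end
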